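/- arXiv:2504.10256 — 2 statements merged into one kernel-verified Lean document; each statement's English description precedes it below -/
import Mathlib

section
/- Let (X,d) be a compact metric space equipped with a finite Borel measure μ, let p ∈ (1,∞), and let N ≥ 1. Let φ_n, φ : X → X (n ∈ ℕ) be bijections such that φ_n, φ, φ_n⁻¹ and φ⁻¹ are all μ-measure preserving, and assume φ_n → φ uniformly on X. Let u_n, u ∈ L^p(μ; ℝ^N) with sup_n ‖u_n‖_{L^p(μ)} < ∞ and suppose u_n converges weakly to u in L^p(μ; ℝ^N). Then ‖u_n∘φ_n⁻¹‖_{L^p(μ)} = ‖u_n‖_{L^p(μ)} for every n, and for every continuous ψ : X → ℝ^N one has ∫_X (u_n∘φ_n⁻¹)·ψ dμ → ∫_X (u∘φ⁻¹)·ψ dμ; in particular u_n∘φ_n⁻¹ converges weakly to u∘φ⁻¹ in L^p(μ; ℝ^N). -/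
/-!
Changing variables by the measure-preserving bijection `φₙ` turns `∫ g • (uₙ ∘ φₙ⁻¹)` into
`∫ (g ∘ φₙ) • uₙ`. For `g ∈ L^{p'}` we have `g ∘ φₙ → g ∘ φ` in `L^{p'}`: approximate `g` by a
bounded continuous `g₀`; on the compact space `g₀` is uniformly continuous, so `g₀ ∘ φₙ → g₀ ∘ φ`
uniformly, while composing with measure-preserving maps does not change the distance to `g`.
By Hölder and the uniform `L^p` bound, `∫ (g ∘ φₙ - g ∘ φ) • uₙ → 0`, and
`∫ (g ∘ φ) • uₙ → ∫ (g ∘ φ) • u` by weak convergence. Continuous vector-valued test functions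
reduce to scalar ones through an orthonormal basis.
-/

open MeasureTheory Filter Topology
open scoped ENNReal

namespace MeasureTheory

section Uniform

variable {ι α E : Type*} [MeasurableSpace α] {μ : Measure α} [IsFiniteMeasure μ]
  [NormedAddCommGroup E] {l : Filter ι}

theorem tendsto_eLpNorm_sub_of_tendstoUniformly {F : ι → α → E} {f : α → E}
    (h : TendstoUniformly F f l) (r : ℝ≥0∞) :
    Tendsto (fun i => eLpNorm (F i - f) r μ) l (𝓝 0) := by
  set c := μ Set.univ ^ r.toReal⁻¹
  have hc : c ≠ ∞ := ENNReal.rpow_ne_top_of_nonneg (by positivity) (measure_ne_top μ _)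
  have hbound : Tendsto (fun δ : ℝ => c * ENNReal.ofReal δ) (𝓝 0) (𝓝 0) := by
    simpa using ENNReal.Tendsto.const_mul (ENNReal.continuous_ofReal.tendsto 0) (Or.inr hc)
  rw [ENNReal.tendsto_nhds_zero]
  intro ε hε
  obtain ⟨δ, hδ, hδε⟩ := (hbound.eventually (Iic_mem_nhds hε)).exists_gt
  filter_upwards [Metric.tendstoUniformly_iff.1 h δ hδ] with i hi
  calc eLpNorm (F i - f) r μ ≤ c * ENNReal.ofReal δ :=
        eLpNorm_le_of_ae_bound <| ae_of_all _ fun x => by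
          simpa [dist_eq_norm'] using (hi x).le
    _ ≤ ε := hδε

end Uniform

section Holder

variable {α E : Type*} [MeasurableSpace α] {μ : Measure α} [NormedAddCommGroup E]
  [NormedSpace ℝ E] {p q : ℝ≥0∞} [p.HolderConjugate q]

theorem enorm_integral_smul_le {f : α → ℝ} {v : α → E} (hf : AEStronglyMeasurable f μ)
    (hv : AEStronglyMeasurable v μ) :
    ‖∫ x, f x • v x ∂μ‖ₑ ≤ eLpNorm f q μ * eLpNorm v p μ :=
  calc ‖∫ x, f x • v x ∂μ‖ₑ ≤ eLpNorm (f • v) 1 μ := by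
        rw [eLpNorm_one_eq_lintegral_enorm]; exact enorm_integral_le_lintegral_enorm _
    _ ≤ eLpNorm f q μ * eLpNorm v p μ := eLpNorm_smul_le_mul_eLpNorm hv hf

theorem MemLp.integrable_smul {f : α → ℝ} {v : α → E} (hf : MemLp f q μ) (hv : MemLp v p μ) :
    Integrable (fun x => f x • v x) μ :=
  memLp_one_iff_integrable.1 (hv.smul hf)

end Holder

theorem MeasurePreserving.integral_smul_comp_eq {X Y E : Type*} [MeasurableSpace X]
    [MeasurableSpace Y] [NormedAddCommGroup E] [NormedSpace ℝ E] {μ : Measure X} {ν : Measure Y}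
    {S : X → Y} {T : Y → X} (hS : MeasurePreserving S μ ν) (hT : Measurable T)
    (hl : Function.LeftInverse T S) (hr : Function.RightInverse T S) (g : X → ℝ) (v : Y → E) :
    ∫ x, g x • v (S x) ∂μ = ∫ y, g (T y) • v y ∂ν := by
  let e : X ≃ᵐ Y := ⟨⟨S, T, hl, hr⟩, hS.measurable, hT⟩
  simpa [e, hl _] using MeasurePreserving.integral_comp' (f := e) hS (fun y => g (T y) • v y)

open RealInnerProductSpace in
theorem integral_inner_eq_sum_inner_integral_smul {α ι E : Type*} [MeasurableSpace α]
    {μ : Measure α} [Fintype ι] [NormedAddCommGroup E] [InnerProductSpace ℝ E] [CompleteSpace E]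
    (b : OrthonormalBasis ι ℝ E) {v ψ : α → E}
    (hint : ∀ i, Integrable (fun x => ⟪b i, ψ x⟫ • v x) μ) :
    ∫ x, ⟪v x, ψ x⟫ ∂μ = ∑ i, ⟪b i, ∫ x, ⟪b i, ψ x⟫ • v x ∂μ⟫ := by
  simp_rw [← integral_inner (hint _)]
  rw [← integral_finsetSum _ fun i _ => (hint i).const_inner (b i)]
  congr 1 with x
  rw [← b.sum_inner_mul_inner]
  congr 1 with i
  rw [real_inner_smul_right, real_inner_comm, mul_comm]

section Transport

variable {ι X Y E : Type*} [MeasurableSpace X] [MetricSpace Y] [CompactSpace Y]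
  [MeasurableSpace Y] [BorelSpace Y] {μ : Measure X} [IsFiniteMeasure μ] {ν : Measure Y}
  [NormedAddCommGroup E] [NormedSpace ℝ E] {l : Filter ι} {T : ι → X → Y} {T₀ : X → Y}

theorem tendsto_eLpNorm_comp_sub_comp_of_tendstoUniformly {r : ℝ≥0∞} (hr₁ : 1 ≤ r) (hr : r ≠ ∞)
    (hT : ∀ i, MeasurePreserving (T i) μ ν) (hT₀ : MeasurePreserving T₀ μ ν)
    (hunif : TendstoUniformly T T₀ l) {g : Y → E} (hg : MemLp g r ν) :
    Tendsto (fun i => eLpNorm (fun x => g (T i x) - g (T₀ x)) r μ) l (𝓝 0) := by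
  have : IsFiniteMeasure ν := hT₀.map_eq ▸ inferInstance
  rw [ENNReal.tendsto_nhds_zero]
  intro ε hε
  have hε₃ : 0 < ε / 3 := ENNReal.div_pos hε.ne' (by norm_num)
  obtain ⟨g₀, hgg₀, -⟩ := hg.exists_boundedContinuous_eLpNorm_sub_le hr hε₃.ne'
  have hg₀ : TendstoUniformly (fun i x => g₀ (T i x)) (fun x => g₀ (T₀ x)) l :=
    (CompactSpace.uniformContinuous_of_continuous g₀.continuous).comp_tendstoUniformly hunif
  have hh : AEStronglyMeasurable (g - ⇑g₀) ν := hg.1.sub g₀.continuous.aestronglyMeasurable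
  have hhT : ∀ S, MeasurePreserving S μ ν → AEStronglyMeasurable ((g - ⇑g₀) ∘ S) μ :=
    fun S hS => hh.comp_measurePreserving hS
  have hg₀T : ∀ S, MeasurePreserving S μ ν → AEStronglyMeasurable (fun x => g₀ (S x)) μ :=
    fun S hS => g₀.continuous.aestronglyMeasurable.comp_measurePreserving hS
  filter_upwards [ENNReal.tendsto_nhds_zero.1
    (tendsto_eLpNorm_sub_of_tendstoUniformly (μ := μ) hg₀ r) (ε / 3) hε₃] with i hi
  have hsplit : (fun x => g (T i x) - g (T₀ x)) =
      ((g - ⇑g₀) ∘ T i + ((fun x => g₀ (T i x)) - fun x => g₀ (T₀ x))) - (g - ⇑g₀) ∘ T₀ := by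
    ext x; simp only [Pi.sub_apply, Pi.add_apply, Function.comp_apply]; abel
  calc eLpNorm (fun x => g (T i x) - g (T₀ x)) r μ
      ≤ eLpNorm ((g - ⇑g₀) ∘ T i) r μ + eLpNorm ((fun x => g₀ (T i x)) - fun x => g₀ (T₀ x)) r μ
        + eLpNorm ((g - ⇑g₀) ∘ T₀) r μ := by
        have hmid := (hg₀T _ (hT i)).sub (hg₀T _ hT₀)
        rw [hsplit]
        grw [eLpNorm_sub_le ((hhT _ (hT i)).add hmid) (hhT _ hT₀) hr₁,
          eLpNorm_add_le (hhT _ (hT i)) hmid hr₁]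
    _ ≤ ε / 3 + ε / 3 + ε / 3 := by
        rw [eLpNorm_comp_measurePreserving hh (hT i), eLpNorm_comp_measurePreserving hh hT₀]
        gcongr
    _ = ε := ENNReal.add_thirds ε

variable {p q : ℝ≥0∞} [p.HolderConjugate q]

theorem tendsto_integral_smul_comp_of_tendstoUniformly (hq : q ≠ ∞)
    (hT : ∀ i, MeasurePreserving (T i) μ ν) (hT₀ : MeasurePreserving T₀ μ ν)
    (hunif : TendstoUniformly T T₀ l) {v : ι → X → E} {v₀ : X → E} (hv : ∀ i, MemLp (v i) p μ)
    {C : ℝ≥0∞} (hC : C ≠ ∞) (hbound : ∀ i, eLpNorm (v i) p μ ≤ C)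
    (hweak : ∀ f : X → ℝ, MemLp f q μ →
      Tendsto (fun i => ∫ x, f x • v i x ∂μ) l (𝓝 (∫ x, f x • v₀ x ∂μ)))
    {g : Y → ℝ} (hg : MemLp g q ν) :
    Tendsto (fun i => ∫ x, g (T i x) • v i x ∂μ) l (𝓝 (∫ x, g (T₀ x) • v₀ x ∂μ)) := by
  have hgT : ∀ S, MeasurePreserving S μ ν → MemLp (fun x => g (S x)) q μ :=
    fun S hS => hg.comp_measurePreserving hS
  have hdiff :
      Tendsto (fun i => ∫ x, g (T i x) • v i x ∂μ - ∫ x, g (T₀ x) • v i x ∂μ) l (𝓝 0) := by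
    have hlim : Tendsto (fun i => eLpNorm (fun x => g (T i x) - g (T₀ x)) q μ * C) l (𝓝 0) := by
      simpa using ENNReal.Tendsto.mul_const (tendsto_eLpNorm_comp_sub_comp_of_tendstoUniformly
        (ENNReal.HolderConjugate.one_le q p) hq hT hT₀ hunif hg) (Or.inr hC)
    refine tendsto_zero_iff_enorm_tendsto_zero.2 (tendsto_of_tendsto_of_tendsto_of_le_of_le
      tendsto_const_nhds hlim (fun _ => bot_le) fun i => ?_)
    rw [← integral_sub ((hgT _ (hT i)).integrable_smul (hv i))
      ((hgT _ hT₀).integrable_smul (hv i))]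
    simp only [← sub_smul]
    exact (enorm_integral_smul_le (f := fun x => g (T i x) - g (T₀ x))
      ((hgT _ (hT i)).1.sub (hgT _ hT₀).1) (hv i).1).trans (by gcongr; exact hbound i)
  simpa using hdiff.add (hweak _ (hgT _ hT₀))

end Transport

end MeasureTheory

theorem stmt0_general
    {X : Type*} [MetricSpace X] [CompactSpace X]
    [MeasurableSpace X] [BorelSpace X]
    (μ : Measure X) [IsFiniteMeasure μ]
    (p : ℝ) (hp : 1 < p)
    (N : ℕ)
    (φn φninv : ℕ → X → X) (φ φinv : X → X)
    (hbijn : ∀ n, Function.LeftInverse (φninv n) (φn n) ∧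
      Function.RightInverse (φninv n) (φn n))
    (hbij : Function.LeftInverse φinv φ ∧ Function.RightInverse φinv φ)
    (hmpn : ∀ n, MeasurePreserving (φn n) μ μ)
    (hmpninv : ∀ n, MeasurePreserving (φninv n) μ μ)
    (hmp : MeasurePreserving φ μ μ) (hmpinv : MeasurePreserving φinv μ μ)
    (hunif : TendstoUniformly (fun n => φn n) φ atTop)
    (un : ℕ → X → EuclideanSpace ℝ (Fin N)) (u : X → EuclideanSpace ℝ (Fin N))
    (hun : ∀ n, MemLp (un n) (ENNReal.ofReal p) μ)
    (hu : MemLp u (ENNReal.ofReal p) μ)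
    (C : ℝ≥0∞) (hC : C ≠ ⊤)
    (hbound : ∀ n, eLpNorm (un n) (ENNReal.ofReal p) μ ≤ C)
    (hweak : ∀ g : X → ℝ, MemLp g (ENNReal.ofReal (p / (p - 1))) μ →
      Tendsto (fun n => ∫ x, g x • un n x ∂μ) atTop (𝓝 (∫ x, g x • u x ∂μ))) :
    (∀ n, eLpNorm (fun x => un n (φninv n x)) (ENNReal.ofReal p) μ
        = eLpNorm (un n) (ENNReal.ofReal p) μ)
    ∧ (∀ ψ : X → EuclideanSpace ℝ (Fin N), Continuous ψ →
        Tendsto (fun n => ∫ x, (inner ℝ (un n (φninv n x)) (ψ x) : ℝ) ∂μ)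
          atTop (𝓝 (∫ x, (inner ℝ (u (φinv x)) (ψ x) : ℝ) ∂μ)))
    ∧ (∀ g : X → ℝ, MemLp g (ENNReal.ofReal (p / (p - 1))) μ →
        Tendsto (fun n => ∫ x, g x • un n (φninv n x) ∂μ) atTop
          (𝓝 (∫ x, g x • u (φinv x) ∂μ))) := by
  have : (ENNReal.ofReal p).HolderConjugate (ENNReal.ofReal (p / (p - 1))) :=
    (Real.HolderConjugate.conjExponent hp).ennrealOfReal
  have hcomp : ∀ g : X → ℝ, MemLp g (ENNReal.ofReal (p / (p - 1))) μ →
      Tendsto (fun n => ∫ x, g x • un n (φninv n x) ∂μ) atTop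
        (𝓝 (∫ x, g x • u (φinv x) ∂μ)) := by
    intro g hg
    simp only [(hmpninv _).integral_smul_comp_eq (hmpn _).measurable (hbijn _).2 (hbijn _).1,
      hmpinv.integral_smul_comp_eq hmp.measurable hbij.2 hbij.1]
    exact tendsto_integral_smul_comp_of_tendstoUniformly ENNReal.ofReal_ne_top hmpn hmp hunif hun
      hC hbound hweak hg
  refine ⟨fun n => eLpNorm_comp_measurePreserving (hun n).1 (hmpninv n), fun ψ hψ => ?_, hcomp⟩
  set b := EuclideanSpace.basisFun (Fin N) ℝ
  have hψb : ∀ i, MemLp (fun x => inner ℝ (b i) (ψ x)) (ENNReal.ofReal (p / (p - 1))) μ := fun i =>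
    (continuous_const.inner hψ).memLp_of_hasCompactSupport (.of_compactSpace _)
  rw [integral_inner_eq_sum_inner_integral_smul (v := fun x => u (φinv x)) b fun i =>
      (hψb i).integrable_smul (hu.comp_measurePreserving hmpinv)]
  simp_rw [integral_inner_eq_sum_inner_integral_smul (v := fun x => un _ (φninv _ x)) b fun i =>
      (hψb i).integrable_smul ((hun _).comp_measurePreserving (hmpninv _))]
  exact tendsto_finsetSum _ fun i _ => tendsto_const_nhds.inner (hcomp _ (hψb i))

/-- Weak limits in `L^p` are transported through a uniformly convergent sequence of
measure-preserving bijections: the composed functions have the same `L^p` norms, their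
integrals against continuous test functions converge, and they converge weakly. -/
theorem stmt0
    {X : Type*} [MetricSpace X] [CompactSpace X]
    [MeasurableSpace X] [BorelSpace X]
    (μ : Measure X) [IsFiniteMeasure μ]
    (p : ℝ) (hp : 1 < p)
    (N : ℕ) (hN : 1 ≤ N)
    (φn φninv : ℕ → X → X) (φ φinv : X → X)
    (hbijn : ∀ n, Function.LeftInverse (φninv n) (φn n) ∧
      Function.RightInverse (φninv n) (φn n))
    (hbij : Function.LeftInverse φinv φ ∧ Function.RightInverse φinv φ)
    (hmpn : ∀ n, MeasurePreserving (φn n) μ μ)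
    (hmpninv : ∀ n, MeasurePreserving (φninv n) μ μ)
    (hmp : MeasurePreserving φ μ μ) (hmpinv : MeasurePreserving φinv μ μ)
    (hunif : TendstoUniformly (fun n => φn n) φ atTop)
    (un : ℕ → X → EuclideanSpace ℝ (Fin N)) (u : X → EuclideanSpace ℝ (Fin N))
    (hun : ∀ n, MemLp (un n) (ENNReal.ofReal p) μ)
    (hu : MemLp u (ENNReal.ofReal p) μ)
    (C : ℝ≥0∞) (hC : C ≠ ⊤)
    (hbound : ∀ n, eLpNorm (un n) (ENNReal.ofReal p) μ ≤ C)
    (hweak : ∀ g : X → ℝ, MemLp g (ENNReal.ofReal (p / (p - 1))) μ →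
      Tendsto (fun n => ∫ x, g x • un n x ∂μ) atTop (𝓝 (∫ x, g x • u x ∂μ))) :
    (∀ n, eLpNorm (fun x => un n (φninv n x)) (ENNReal.ofReal p) μ
        = eLpNorm (un n) (ENNReal.ofReal p) μ)
    ∧ (∀ ψ : X → EuclideanSpace ℝ (Fin N), Continuous ψ →
        Tendsto (fun n => ∫ x, (inner ℝ (un n (φninv n x)) (ψ x) : ℝ) ∂μ)
          atTop (𝓝 (∫ x, (inner ℝ (u (φinv x)) (ψ x) : ℝ) ∂μ)))
    ∧ (∀ g : X → ℝ, MemLp g (ENNReal.ofReal (p / (p - 1))) μ →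
        Tendsto (fun n => ∫ x, g x • un n (φninv n x) ∂μ) atTop
          (𝓝 (∫ x, g x • u (φinv x) ∂μ))) :=
  stmt0_general μ p hp N φn φninv φ φinv hbijn hbij hmpn hmpninv hmp hmpinv hunif un u hun hu C hC
    hbound hweak
end

section
/- Let N ≥ 1 and let φ : ℝ^N → ℝ^N be a bijective C² map whose inverse is C¹, such that det Dφ(x) = 1 for every x ∈ ℝ^N. Let ψ : ℝ^N → ℝ^N be C¹. Then for every x ∈ ℝ^N: (div(ψ∘φ⁻¹))(φ(x)) = div( y ↦ (Dφ(y))⁻¹ ψ(y) )(x), where for a differentiable vector field F : ℝ^N → ℝ^N we write div F(x) := trace(DF(x)), and (Dφ(y))⁻¹ denotes the inverse of the Jacobian matrix of φ at y. -/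
/-! Write `B = (Dφ x)⁻¹` and `S = D²φ x`. The chain rule gives `D(ψ ∘ φ⁻¹)(φ x) = Dψ x ∘ B`, while
the product rule, the derivative of inversion and the symmetry of `S` give
`D(y ↦ (Dφ y)⁻¹ ψ y) x = B ∘ Dψ x - B ∘ S (B ψ x)`. The first terms have the same trace, and the
second one is traceless by Jacobi's formula: differentiating `det (B ∘ Dφ y) = det B` at `y = x`,
where `B ∘ Dφ x = 1`, gives `trace (B ∘ S w) = 0` for every `w`. -/

open Topology

open Polynomial in
theorem Matrix.hasDerivAt_det_one_add_smul {𝕜 n : Type*} [NontriviallyNormedField 𝕜] [Fintype n]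
    [DecidableEq n] (M : Matrix n n 𝕜) :
    HasDerivAt (fun t : 𝕜 => (1 + t • M).det) M.trace 0 := by
  have h : (fun t : 𝕜 => (1 + t • M).det) = fun t => (det (1 + (X : 𝕜[X]) • M.map C)).eval t := by
    funext t
    simp [eval_det, ← smul_eq_mul_diagonal]
  rw [h, ← derivative_det_one_add_X_smul]
  exact Polynomial.hasDerivAt _ 0

namespace ContinuousLinearMap

variable {𝕜 E : Type*} [NontriviallyNormedField 𝕜] [NormedAddCommGroup E] [NormedSpace 𝕜 E]
  [FiniteDimensional 𝕜 E]

theorem hasDerivAt_det_one_add_smul (M : E →L[𝕜] E) :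
    HasDerivAt (fun t : 𝕜 => (1 + t • M).det) (LinearMap.trace 𝕜 E M) 0 := by
  let b := Module.finBasis 𝕜 E
  have h : ∀ t : 𝕜, (1 + t • M).det = (1 + t • LinearMap.toMatrix b b M).det := by
    intro t
    rw [det, ← LinearMap.det_toMatrix b]
    simp [map_add, LinearMap.toMatrix_one]
  simpa [h, LinearMap.trace_eq_matrix_trace 𝕜 b] using
    (LinearMap.toMatrix b b (M : E →ₗ[𝕜] E)).hasDerivAt_det_one_add_smul

theorem differentiable_det [CompleteSpace 𝕜] : Differentiable 𝕜 (fun L : E →L[𝕜] E => L.det) := by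
  let b := Module.finBasis 𝕜 E
  have h : (fun L : E →L[𝕜] E => L.det) = fun L => ∑ σ : Equiv.Perm (Fin _),
      (Equiv.Perm.sign σ : 𝕜) * ∏ i, b.equivFunL (L (b i)) (σ i) := by
    funext L
    rw [det, ← LinearMap.det_toMatrix b, Matrix.det_apply']
    simp [LinearMap.toMatrix_apply]
  rw [h]
  fun_prop

theorem fderiv_det_one_apply [CompleteSpace 𝕜] (M : E →L[𝕜] E) :
    fderiv 𝕜 (fun L : E →L[𝕜] E => L.det) 1 M = LinearMap.trace 𝕜 E M := by
  have hline : HasDerivAt (fun t : 𝕜 => 1 + t • M) M 0 := by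
    simpa using ((hasDerivAt_id (0 : 𝕜)).smul_const M).const_add 1
  have hcomp := (differentiable_det (1 + (0 : 𝕜) • M)).hasFDerivAt.comp_hasDerivAt (0 : 𝕜) hline
  simp only [zero_smul, add_zero] at hcomp
  exact hcomp.unique (hasDerivAt_det_one_add_smul M)

theorem trace_inverse_comp_eq_zero_of_det_eventuallyEq [CompleteSpace 𝕜] {F : Type*}
    [NormedAddCommGroup F] [NormedSpace 𝕜 F] {f : F → E →L[𝕜] E} {f' : F →L[𝕜] E →L[𝕜] E}
    {x : F} (hf : HasFDerivAt f f' x) (hdet : ∀ᶠ y in 𝓝 x, (f y).det = (f x).det)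
    (hx : (f x).det ≠ 0) (w : F) :
    LinearMap.trace 𝕜 E ((f x).inverse ∘L f' w) = 0 := by
  have hBf : (f x).inverse ∘L f x = 1 := by
    rw [← coe_toContinuousLinearEquivOfDetNeZero (f x) hx, inverse_equiv]
    exact ContinuousLinearEquiv.coe_symm_comp_coe _
  set B := (f x).inverse
  have hg : HasFDerivAt (fun y => B ∘L f y) (compL 𝕜 E E E B ∘L f') x :=
    (compL 𝕜 E E E B).hasFDerivAt.comp x hf
  have hconst : HasFDerivAt ((fun L : E →L[𝕜] E => L.det) ∘ fun y => B ∘L f y)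
      (0 : F →L[𝕜] 𝕜) x := by
    refine (hasFDerivAt_const (B.det * (f x).det) x).congr_of_eventuallyEq ?_
    filter_upwards [hdet] with y hy
    rw [Function.comp_apply, det, toLinearMap_comp, LinearMap.det_comp]
    exact congrArg _ hy
  have hchain := ((differentiable_det (B ∘L f x)).hasFDerivAt.comp x hg).unique hconst
  rw [hBf] at hchain
  have hw := congrArg (· w) hchain
  simp only [comp_apply, compL_apply, fderiv_det_one_apply, zero_apply] at hw
  exact hw

end ContinuousLinearMap

theorem Function.LeftInverse.fderiv_eq_symm {𝕜 E F : Type*} [NontriviallyNormedField 𝕜]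
    [NormedAddCommGroup E] [NormedSpace 𝕜 E] [NormedAddCommGroup F] [NormedSpace 𝕜 F]
    {f : E → F} {g : F → E} {e : E ≃L[𝕜] F} {x : E} (hgf : Function.LeftInverse g f)
    (hg : DifferentiableAt 𝕜 g (f x)) (hf : HasFDerivAt f (e : E →L[𝕜] F) x) :
    fderiv 𝕜 g (f x) = e.symm := by
  have hcomp : fderiv 𝕜 g (f x) ∘L (e : E →L[𝕜] F) = ContinuousLinearMap.id 𝕜 E := by
    rw [← hf.fderiv, ← fderiv_comp x hg hf.differentiableAt, hgf.comp_eq_id, fderiv_id]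
  ext v
  simpa using congrArg (· (e.symm v)) hcomp

theorem hasFDerivAt_fderiv_inverse_apply {𝕜 E : Type*} [NontriviallyNormedField 𝕜]
    [IsRCLikeNormedField 𝕜] [NormedAddCommGroup E] [NormedSpace 𝕜 E] [CompleteSpace E]
    {φ ψ : E → E} {x : E} (hφ : ContDiff 𝕜 2 φ) (hψ : DifferentiableAt 𝕜 ψ x)
    (hx : IsUnit (fderiv 𝕜 φ x)) :
    HasFDerivAt (fun y => (fderiv 𝕜 φ y).inverse (ψ y))
      ((fderiv 𝕜 φ x).inverse ∘L fderiv 𝕜 ψ x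
        - (fderiv 𝕜 φ x).inverse ∘L fderiv 𝕜 (fderiv 𝕜 φ) x ((fderiv 𝕜 φ x).inverse (ψ x))) x := by
  obtain ⟨u, hu⟩ := hx
  have hS : HasFDerivAt (fderiv 𝕜 φ) (fderiv 𝕜 (fderiv 𝕜 φ) x) x :=
    ((hφ.fderiv_right one_add_one_eq_two.le).differentiable one_ne_zero x).hasFDerivAt
  have hsymm := second_derivative_symmetric
    (fun y => (hφ.differentiable two_ne_zero y).hasFDerivAt) hS
  have hB : (fderiv 𝕜 φ x).inverse = ↑u⁻¹ := by
    rw [← hu, ← ContinuousLinearMap.ringInverse_eq_inverse, Ring.inverse_unit]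
  have hinv : HasFDerivAt (fun y => (fderiv 𝕜 φ y).inverse)
      (-ContinuousLinearMap.mulLeftRight 𝕜 _ ↑u⁻¹ ↑u⁻¹ ∘L fderiv 𝕜 (fderiv 𝕜 φ) x) x := by
    have hinv0 : HasFDerivAt Ring.inverse
        (-ContinuousLinearMap.mulLeftRight 𝕜 _ ↑u⁻¹ ↑u⁻¹) (fderiv 𝕜 φ x) :=
      hu ▸ hasFDerivAt_ringInverse u
    rw [← ContinuousLinearMap.ringInverse_eq_inverse]
    exact hinv0.comp x hS
  refine (hinv.clm_apply hψ.hasFDerivAt).congr_fderiv ?_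
  ext v
  simp only [hB, add_apply, ContinuousLinearMap.comp_apply, ContinuousLinearMap.flip_apply,
    neg_apply, ContinuousLinearMap.mulLeftRight_apply, mul_apply_eq_comp, sub_apply]
  rw [hsymm, sub_eq_add_neg]

theorem stmt2_general
    (N : ℕ)
    (φ φinv ψ : EuclideanSpace ℝ (Fin N) → EuclideanSpace ℝ (Fin N))
    (hinvl : Function.LeftInverse φinv φ)
    (hφ : ContDiff ℝ 2 φ) (hφinv : ContDiff ℝ 1 φinv)
    (hdet : ∀ x, LinearMap.det
      (fderiv ℝ φ x : EuclideanSpace ℝ (Fin N) →ₗ[ℝ] EuclideanSpace ℝ (Fin N)) = 1)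
    (hψ : ContDiff ℝ 1 ψ) :
    ∀ x, LinearMap.trace ℝ (EuclideanSpace ℝ (Fin N))
        (fderiv ℝ (ψ ∘ φinv) (φ x) :
          EuclideanSpace ℝ (Fin N) →ₗ[ℝ] EuclideanSpace ℝ (Fin N))
      = LinearMap.trace ℝ (EuclideanSpace ℝ (Fin N))
        (fderiv ℝ (fun y => (fderiv ℝ φ y).inverse (ψ y)) x :
          EuclideanSpace ℝ (Fin N) →ₗ[ℝ] EuclideanSpace ℝ (Fin N)) := by
  intro x
  have hdetx : (fderiv ℝ φ x).det ≠ 0 := fun h => one_ne_zero ((hdet x).symm.trans h)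
  set e := (fderiv ℝ φ x).toContinuousLinearEquivOfDetNeZero hdetx
  have he : (e : _ →L[ℝ] _) = fderiv ℝ φ x :=
    (fderiv ℝ φ x).coe_toContinuousLinearEquivOfDetNeZero hdetx
  have hS : HasFDerivAt (fderiv ℝ φ) (fderiv ℝ (fderiv ℝ φ) x) x :=
    ((hφ.fderiv_right one_add_one_eq_two.le).differentiable one_ne_zero x).hasFDerivAt
  have hφinvx : fderiv ℝ φinv (φ x) = e.symm := hinvl.fderiv_eq_symm
    (hφinv.differentiable one_ne_zero _) (he ▸ (hφ.differentiable two_ne_zero x).hasFDerivAt)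
  rw [fderiv_comp _ (hψ.differentiable one_ne_zero _) (hφinv.differentiable one_ne_zero _),
    hinvl x, hφinvx,
    (hasFDerivAt_fderiv_inverse_apply hφ (hψ.differentiable one_ne_zero x)
      ⟨(ContinuousLinearEquiv.unitsEquiv ℝ _).symm e, he⟩).fderiv,
    ContinuousLinearMap.toLinearMap_sub, map_sub,
    ContinuousLinearMap.trace_inverse_comp_eq_zero_of_det_eventuallyEq hS
      (.of_forall fun y => (hdet y).trans (hdet x).symm) hdetx, sub_zero,
    ← he, ContinuousLinearMap.inverse_equiv, ContinuousLinearMap.toLinearMap_comp,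
    ContinuousLinearMap.toLinearMap_comp, LinearMap.trace_comp_comm']

/-- For a volume-preserving diffeomorphism `φ` (Jacobian determinant `1`), the transformed
divergence `div^φ ψ := (div (ψ ∘ φ⁻¹)) ∘ φ` can be written in divergence form:
`(div (ψ ∘ φ⁻¹))(φ x) = div (y ↦ (Dφ y)⁻¹ (ψ y)) x`, where `div F x = trace (DF x)`. -/
theorem stmt2
    (N : ℕ) (hN : 1 ≤ N)
    (φ φinv ψ : EuclideanSpace ℝ (Fin N) → EuclideanSpace ℝ (Fin N))
    (hinvl : Function.LeftInverse φinv φ) (hinvr : Function.RightInverse φinv φ)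
    (hφ : ContDiff ℝ 2 φ) (hφinv : ContDiff ℝ 1 φinv)
    (hdet : ∀ x, LinearMap.det
      (fderiv ℝ φ x : EuclideanSpace ℝ (Fin N) →ₗ[ℝ] EuclideanSpace ℝ (Fin N)) = 1)
    (hψ : ContDiff ℝ 1 ψ) :
    ∀ x, LinearMap.trace ℝ (EuclideanSpace ℝ (Fin N))
        (fderiv ℝ (ψ ∘ φinv) (φ x) :
          EuclideanSpace ℝ (Fin N) →ₗ[ℝ] EuclideanSpace ℝ (Fin N))
      = LinearMap.trace ℝ (EuclideanSpace ℝ (Fin N))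
        (fderiv ℝ (fun y => (fderiv ℝ φ y).inverse (ψ y)) x :
          EuclideanSpace ℝ (Fin N) →ₗ[ℝ] EuclideanSpace ℝ (Fin N)) :=
  stmt2_general N φ φinv ψ hinvl hφ hφinv hdet hψ
end
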